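/- Let $f\in W^{1,1}(B_r)$ where $B_r\subset\mathbb{R}^n$ is a ball of radius $r$, and let $k<l$ be real numbers. Then there exists a constant $C$ depending only on $n$ such that $(l-k)\,|\{x\in B_r: f(x)>l\}| \le \frac{C\, r^{n+1}}{|\{x\in B_r: f(x)<k\}|}\int_{\{k<f<l\}}|\nabla f|\,dx$. -/

import Mathlib

open MeasureTheory Set
open scoped ENNReal NNReal

section Aux

lemma scale_bound (F : EuclideanSpace ℝ (Fin n) → ℝ≥0∞) (hF : Measurable F)
    {a : ℝ} (ha : 1/2 ≤ a) (c : EuclideanSpace ℝ (Fin n)) :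
    ∫⁻ z, F (a • z + c) ∂volume ≤ 2 ^ n * ∫⁻ z, F z ∂volume := by
  have ha0 : (0:ℝ) < a := lt_of_lt_of_le (by norm_num) ha
  have hG : Measurable (fun w => F (w + c)) := hF.comp (measurable_add_const c)
  have h1 : ∫⁻ z, F (a • z + c) ∂volume
      = ∫⁻ w, F (w + c) ∂(Measure.map (a • ·) volume) := by
    rw [lintegral_map hG (measurable_const_smul a)]
  rw [h1, MeasureTheory.Measure.map_addHaar_smul volume ha0.ne', lintegral_smul_measure,
    lintegral_add_right_eq_self (fun w => F w) c]
  rw [smul_eq_mul]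
  gcongr
  have hfr : Module.finrank ℝ (EuclideanSpace ℝ (Fin n)) = n := finrank_euclideanSpace_fin
  rw [hfr, abs_of_nonneg (by positivity)]
  rw [ENNReal.ofReal_le_iff_le_toReal (by simp), ENNReal.toReal_pow]
  simp only [ENNReal.toReal_ofNat]
  rw [inv_le_iff_one_le_mul₀ (by positivity)]
  calc (1:ℝ) = (2 * (1/2))^n := by norm_num
  _ ≤ (2*a)^n := by apply pow_le_pow_left₀ (by norm_num); linarith
  _ = 2^n * a^n := by rw [mul_pow]

lemma seg_lemma {n : ℕ} {x0 : EuclideanSpace ℝ (Fin n)} {r : ℝ}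
    {f : EuclideanSpace ℝ (Fin n) → ℝ} {k l : ℝ} (hkl : k < l)
    (hf : DifferentiableOn ℝ f (Metric.ball x0 r))
    {x y : EuclideanSpace ℝ (Fin n)} (hx : x ∈ Metric.ball x0 r) (hy : y ∈ Metric.ball x0 r)
    (hfx : l < f x) (hfy : f y < k) :
    ENNReal.ofReal (l - k) ≤ ∫⁻ t in Set.Ioo (0:ℝ) 1,
      (‖x - y‖₊ : ℝ≥0∞) * (Set.indicator {z ∈ Metric.ball x0 r | k < f z ∧ f z < l}
        (fun z => (‖fderiv ℝ f z‖₊ : ℝ≥0∞)) (y + t • (x - y))) ∂volume := by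
  by_cases hT : (∫⁻ t in Set.Ioo (0:ℝ) 1,
      (‖x - y‖₊ : ℝ≥0∞) * (Set.indicator {z ∈ Metric.ball x0 r | k < f z ∧ f z < l}
        (fun z => (‖fderiv ℝ f z‖₊ : ℝ≥0∞)) (y + t • (x - y))) ∂volume) = ⊤
  · rw [hT]; exact le_top
  set E' : Set (EuclideanSpace ℝ (Fin n)) := {z ∈ Metric.ball x0 r | k < f z ∧ f z < l} with hE'
  set F : EuclideanSpace ℝ (Fin n) → ℝ≥0∞ :=
    Set.indicator E' (fun z => (‖fderiv ℝ f z‖₊ : ℝ≥0∞)) with hF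
  set γ : ℝ → EuclideanSpace ℝ (Fin n) := fun t => y + t • (x - y) with hγ
  have hγc : Continuous γ := continuous_const.add (continuous_id.smul continuous_const)
  have hmem : ∀ t ∈ Icc (0:ℝ) 1, γ t ∈ Metric.ball x0 r := fun t ht =>
    (convex_ball x0 r).add_smul_sub_mem hy hx ht
  have hdiff : ∀ t ∈ Icc (0:ℝ) 1, DifferentiableAt ℝ f (γ t) := fun t ht =>
    hf.differentiableAt (Metric.isOpen_ball.mem_nhds (hmem t ht))
  set φ : ℝ → ℝ := fun t => f (γ t) with hφ
  set g : ℝ → ℝ := fun t => (fderiv ℝ f (γ t)) (x - y) with hg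
  have hfd : ∀ t ∈ Icc (0:ℝ) 1, HasDerivAt φ (g t) t := by
    intro t ht
    have h1 : HasDerivAt γ (x - y) t := by
      have h0 := ((hasDerivAt_id t).smul_const (x - y)).const_add y
      rw [one_smul] at h0
      exact h0
    exact ((hdiff t ht).hasFDerivAt.comp_hasDerivAt t h1)
  have hφc : ContinuousOn φ (Icc 0 1) := fun t ht => ((hfd t ht).continuousAt).continuousWithinAt
  have hφ0 : φ 0 = f y := by simp [hφ, hγ]
  have hφ1 : φ 1 = f x := by simp [hφ, hγ]
  -- first time φ reaches l
  set S : Set ℝ := {t ∈ Icc (0:ℝ) 1 | l ≤ φ t} with hS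
  have h1S : (1:ℝ) ∈ S := ⟨⟨zero_le_one, le_refl 1⟩, by rw [hφ1]; exact hfx.le⟩
  have hScl : IsClosed S := by
    have := hφc.preimage_isClosed_of_isClosed isClosed_Icc (isClosed_Ici (a := l))
    exact this
  set b : ℝ := sInf S with hb
  have hbS : b ∈ S := hScl.csInf_mem ⟨1, h1S⟩ ⟨0, fun t ht => ht.1.1⟩
  have hb1 : b ≤ 1 := hbS.1.2
  have hb0 : 0 < b := by
    rcases lt_or_eq_of_le hbS.1.1 with h | h
    · exact h
    · exfalso; have := hbS.2; rw [← h, hφ0] at this; linarith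
  have hltb : ∀ t ∈ Ico (0:ℝ) b, φ t < l := by
    intro t ht
    by_contra hc
    have htS : t ∈ S := ⟨⟨ht.1, ht.2.le.trans hb1⟩, not_lt.1 hc⟩
    have hbdd : BddBelow S := ⟨0, fun u hu => hu.1.1⟩
    exact absurd (csInf_le hbdd htS) (not_le.2 ht.2)
  -- last time before b that φ is ≤ k
  set T : Set ℝ := {t ∈ Icc (0:ℝ) b | φ t ≤ k} with hT2
  have h0T : (0:ℝ) ∈ T := ⟨⟨le_refl 0, hb0.le⟩, by rw [hφ0]; exact hfy.le⟩
  have hTcl : IsClosed T := by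
    have hsub : ContinuousOn φ (Icc 0 b) := hφc.mono (Icc_subset_Icc le_rfl hb1)
    have := hsub.preimage_isClosed_of_isClosed isClosed_Icc (isClosed_Iic (a := k))
    exact this
  set a : ℝ := sSup T with ha
  have haT : a ∈ T := hTcl.csSup_mem ⟨0, h0T⟩ ⟨b, fun t ht => ht.1.2⟩
  have ha0 : 0 ≤ a := haT.1.1
  have hab : a < b := by
    rcases lt_or_eq_of_le haT.1.2 with h | h
    · exact h
    · exfalso; have := haT.2; rw [h] at this; have := hbS.2; linarith
  have hgtk : ∀ t ∈ Ioc a b, k < φ t := by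
    intro t ht
    by_contra hc
    have htT : t ∈ T := ⟨⟨ha0.trans ht.1.le, ht.2⟩, not_lt.1 hc⟩
    have hbdd : BddAbove T := ⟨b, fun u hu => hu.1.2⟩
    exact absurd (le_csSup hbdd htT) (not_le.2 ht.1)
  have hIooSub : Ioo a b ⊆ Ioo (0:ℝ) 1 :=
    Ioo_subset_Ioo (by exact_mod_cast ha0) hb1
  have hIccSub : Icc a b ⊆ Icc (0:ℝ) 1 := Icc_subset_Icc ha0 hb1
  have hmemE' : ∀ t ∈ Ioo a b, γ t ∈ E' := by
    intro t ht
    refine ⟨hmem t (hIccSub ⟨ht.1.le, ht.2.le⟩), hgtk t ⟨ht.1, ht.2.le⟩,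
      hltb t ⟨ha0.trans ht.1.le, ht.2⟩⟩
  -- measurability
  have hgm : Measurable g :=
    (measurable_fderiv_apply_const ℝ f (x - y)).comp hγc.measurable
  -- pointwise bound on Ioo a b
  have hbound : ∀ t ∈ Ioo a b, (‖g t‖₊ : ℝ≥0∞) ≤ (‖x - y‖₊ : ℝ≥0∞) * F (γ t) := by
    intro t ht
    rw [hF, Set.indicator_of_mem (hmemE' t ht)]
    have : ‖g t‖ ≤ ‖fderiv ℝ f (γ t)‖ * ‖x - y‖ := (fderiv ℝ f (γ t)).le_opNorm (x - y)
    have h2 : (‖g t‖₊ : ℝ≥0∞) ≤ (‖fderiv ℝ f (γ t)‖₊ : ℝ≥0∞) * ‖x - y‖₊ := by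
      rw [← ENNReal.coe_mul]
      exact_mod_cast this
    rw [mul_comm]
    exact h2
  -- lintegral of ‖g‖ finite on Ioo a b
  have hlint : (∫⁻ t in Ioo a b, (‖g t‖₊ : ℝ≥0∞) ∂volume) ≤
      ∫⁻ t in Set.Ioo (0:ℝ) 1, (‖x - y‖₊ : ℝ≥0∞) * F (γ t) ∂volume := by
    refine le_trans (setLIntegral_mono' measurableSet_Ioo hbound) ?_
    exact lintegral_mono_set hIooSub
  have hfin : (∫⁻ t in Ioo a b, (‖g t‖₊ : ℝ≥0∞) ∂volume) < ⊤ :=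
    lt_of_le_of_lt hlint (lt_top_iff_ne_top.2 hT)
  have hIoc_eq : (∫⁻ t in Ioc a b, (‖g t‖₊ : ℝ≥0∞) ∂volume)
      = ∫⁻ t in Ioo a b, (‖g t‖₊ : ℝ≥0∞) ∂volume := by
    exact (setLIntegral_congr (Ioo_ae_eq_Ioc (a := a) (b := b))).symm
  have hgInt : IntegrableOn g (Ioc a b) := by
    refine ⟨hgm.aestronglyMeasurable.restrict, ?_⟩
    rw [HasFiniteIntegral]
    exact lt_of_eq_of_lt hIoc_eq hfin
  have hiInt : IntervalIntegrable g volume a b :=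
    (intervalIntegrable_iff_integrableOn_Ioc_of_le hab.le).2 hgInt
  have hFTC : ∫ t in a..b, g t = φ b - φ a := by
    refine intervalIntegral.integral_eq_sub_of_hasDerivAt (fun t ht => ?_) hiInt
    exact hfd t (hIccSub (by rwa [uIcc_of_le hab.le] at ht))
  have h1 : l - k ≤ ∫ t in a..b, g t := by
    rw [hFTC]; exact sub_le_sub hbS.2 haT.2
  have h2 : (∫ t in a..b, g t) ≤ ∫ t in Ioc a b, ‖g t‖ := by
    rw [intervalIntegral.integral_of_le hab.le]
    exact integral_mono hgInt hgInt.norm (fun t => le_abs_self _)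
  calc ENNReal.ofReal (l - k)
      ≤ ENNReal.ofReal (∫ t in Ioc a b, ‖g t‖) := ENNReal.ofReal_le_ofReal (h1.trans h2)
    _ = ∫⁻ t in Ioc a b, (‖g t‖₊ : ℝ≥0∞) ∂volume := ofReal_integral_norm_eq_lintegral_enorm hgInt
    _ = ∫⁻ t in Ioo a b, (‖g t‖₊ : ℝ≥0∞) ∂volume := hIoc_eq
    _ ≤ _ := hlint

lemma fubini_bound {n : ℕ} (F : EuclideanSpace ℝ (Fin n) → ℝ≥0∞) (hFm : Measurable F)
    (B : Set (EuclideanSpace ℝ (Fin n))) (hB : MeasurableSet B) :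
    (∫⁻ x in B, ∫⁻ y in B, ∫⁻ t in Set.Ioo (0:ℝ) 1, F (y + t • (x - y)) ∂volume ∂volume ∂volume)
      ≤ 2 ^ (n+1) * volume B * ∫⁻ z, F z ∂volume := by
  set I : ℝ≥0∞ := ∫⁻ z, F z ∂volume with hI
  have hkey : ∀ (x : EuclideanSpace ℝ (Fin n)) (t : ℝ) (y : EuclideanSpace ℝ (Fin n)),
      y + t • (x - y) = (1 - t) • y + t • x := by
    intro x t y
    rw [sub_smul, one_smul, smul_sub]
    abel
  -- measurability of the full map
  have hmap : ∀ (x : EuclideanSpace ℝ (Fin n)), Measurable fun p : EuclideanSpace ℝ (Fin n) × ℝ =>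
      F (p.1 + p.2 • (x - p.1)) := by
    intro x
    exact hFm.comp ((continuous_fst.add (continuous_snd.smul
      (continuous_const.sub continuous_fst))).measurable)
  -- swap y and t for fixed x
  have hswap1 : ∀ x : EuclideanSpace ℝ (Fin n),
      (∫⁻ y in B, ∫⁻ t in Set.Ioo (0:ℝ) 1, F (y + t • (x - y)) ∂volume ∂volume)
        = ∫⁻ t in Set.Ioo (0:ℝ) 1, ∫⁻ y in B, F (y + t • (x - y)) ∂volume ∂volume := by
    intro x
    exact lintegral_lintegral_swap ((hmap x).aemeasurable)
  rw [lintegral_congr hswap1]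
  -- swap x and t
  have hswap2 :
      (∫⁻ x in B, ∫⁻ t in Set.Ioo (0:ℝ) 1, ∫⁻ y in B, F (y + t • (x - y)) ∂volume ∂volume ∂volume)
        = ∫⁻ t in Set.Ioo (0:ℝ) 1, ∫⁻ x in B, ∫⁻ y in B, F (y + t • (x - y)) ∂volume ∂volume ∂volume := by
    apply lintegral_lintegral_swap
    apply Measurable.aemeasurable
    apply Measurable.lintegral_prod_right (f := fun (p : EuclideanSpace ℝ (Fin n) × ℝ)
      (y : EuclideanSpace ℝ (Fin n)) => F (y + p.2 • (p.1 - y)))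
    have hc : Continuous fun (a : (EuclideanSpace ℝ (Fin n) × ℝ) × EuclideanSpace ℝ (Fin n)) =>
        a.2 + a.1.2 • (a.1.1 - a.2) := by fun_prop
    exact hFm.comp hc.measurable
  rw [hswap2]
  set H : ℝ → ℝ≥0∞ := fun t =>
    ∫⁻ x in B, ∫⁻ y in B, F (y + t • (x - y)) ∂volume ∂volume with hH
  have hsplit : (∫⁻ t in Set.Ioo (0:ℝ) 1, H t ∂volume)
      = (∫⁻ t in Set.Ioc (0:ℝ) (1/2), H t ∂volume)
        + ∫⁻ t in Set.Ioo (1/2 : ℝ) 1, H t ∂volume := by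
    rw [← lintegral_union measurableSet_Ioo
      (Set.disjoint_left.2 (fun t h1 h2 => absurd h1.2 (not_le.2 h2.1)))]
    rw [Ioc_union_Ioo_eq_Ioo (by norm_num) (by norm_num)]
  have hP1 : ∀ t ∈ Set.Ioc (0:ℝ) (1/2), H t ≤ 2 ^ n * I * volume B := by
    intro t ht
    have h1t : 1/2 ≤ 1 - t := by linarith [ht.2]
    have hxb : ∀ x ∈ B, (∫⁻ y in B, F (y + t • (x - y)) ∂volume) ≤ 2 ^ n * I := by
      intro x _
      calc (∫⁻ y in B, F (y + t • (x - y)) ∂volume)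
          = ∫⁻ y in B, F ((1 - t) • y + t • x) ∂volume := by simp only [hkey x t]
        _ ≤ ∫⁻ y, F ((1 - t) • y + t • x) ∂volume := setLIntegral_le_lintegral _ _
        _ ≤ 2 ^ n * I := scale_bound F hFm h1t (t • x)
    calc H t ≤ ∫⁻ _ in B, (2 ^ n * I : ℝ≥0∞) ∂volume := setLIntegral_mono' hB hxb
      _ = 2 ^ n * I * volume B := setLIntegral_const _ _
  have hP2 : ∀ t ∈ Set.Ioo (1/2 : ℝ) 1, H t ≤ 2 ^ n * I * volume B := by
    intro t ht
    have h1t : 1/2 ≤ t := ht.1.le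
    have hkey2 : ∀ (x y : EuclideanSpace ℝ (Fin n)),
        y + t • (x - y) = t • x + (1 - t) • y := by
      intro x y
      rw [sub_smul, one_smul, smul_sub]
      abel
    have hswapxy : H t = ∫⁻ y in B, ∫⁻ x in B, F (y + t • (x - y)) ∂volume ∂volume := by
      rw [hH]
      apply lintegral_lintegral_swap
      have hc : Continuous fun p : EuclideanSpace ℝ (Fin n) × EuclideanSpace ℝ (Fin n) =>
          p.2 + t • (p.1 - p.2) := by fun_prop
      exact (hFm.comp hc.measurable).aemeasurable
    have hyb : ∀ y ∈ B, (∫⁻ x in B, F (y + t • (x - y)) ∂volume) ≤ 2 ^ n * I := by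
      intro y _
      calc (∫⁻ x in B, F (y + t • (x - y)) ∂volume)
          = ∫⁻ x in B, F (t • x + (1 - t) • y) ∂volume := by
            apply lintegral_congr; intro x; rw [hkey2 x y]
        _ ≤ ∫⁻ x, F (t • x + (1 - t) • y) ∂volume := setLIntegral_le_lintegral _ _
        _ ≤ 2 ^ n * I := scale_bound F hFm h1t ((1 - t) • y)
    calc H t = ∫⁻ y in B, ∫⁻ x in B, F (y + t • (x - y)) ∂volume ∂volume := hswapxy
      _ ≤ ∫⁻ _ in B, (2 ^ n * I : ℝ≥0∞) ∂volume := setLIntegral_mono' hB hyb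
      _ = 2 ^ n * I * volume B := setLIntegral_const _ _
  have hmeas1 : volume (Set.Ioc (0:ℝ) (1/2)) ≤ 1 := by
    rw [Real.volume_Ioc]
    rw [show (1:ℝ≥0∞) = ENNReal.ofReal 1 by simp]
    apply ENNReal.ofReal_le_ofReal; norm_num
  have hmeas2 : volume (Set.Ioo (1/2:ℝ) 1) ≤ 1 := by
    rw [Real.volume_Ioo]
    rw [show (1:ℝ≥0∞) = ENNReal.ofReal 1 by simp]
    apply ENNReal.ofReal_le_ofReal; norm_num
  calc (∫⁻ t in Set.Ioo (0:ℝ) 1, H t ∂volume)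
      = (∫⁻ t in Set.Ioc (0:ℝ) (1/2), H t ∂volume)
        + ∫⁻ t in Set.Ioo (1/2 : ℝ) 1, H t ∂volume := hsplit
    _ ≤ (2 ^ n * I * volume B) * volume (Set.Ioc (0:ℝ) (1/2))
        + (2 ^ n * I * volume B) * volume (Set.Ioo (1/2:ℝ) 1) := by
        gcongr
        · exact le_trans (setLIntegral_mono' measurableSet_Ioc hP1)
            (le_of_eq (setLIntegral_const _ _))
        · exact le_trans (setLIntegral_mono' measurableSet_Ioo hP2)
            (le_of_eq (setLIntegral_const _ _))
    _ ≤ (2 ^ n * I * volume B) * 1 + (2 ^ n * I * volume B) * 1 := by gcongr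
    _ = 2 ^ (n+1) * volume B * I := by ring

end Aux

/-- De Giorgi's isoperimetric-type lemma for `W^{1,1}` functions on a ball,
stated in the equivalent multiplied-through form. -/
theorem deGiorgi_isoperimetric (n : ℕ) (hn : 1 ≤ n) :
    ∃ C > (0 : ℝ), ∀ (r : ℝ), 0 < r → ∀ (x0 : EuclideanSpace ℝ (Fin n))
      (f : EuclideanSpace ℝ (Fin n) → ℝ) (k l : ℝ), k < l →
      IntegrableOn f (Metric.ball x0 r) →
      DifferentiableOn ℝ f (Metric.ball x0 r) →
      IntegrableOn (fun x => ‖fderiv ℝ f x‖) (Metric.ball x0 r) →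
      (l - k) * (volume {x ∈ Metric.ball x0 r | l < f x}).toReal *
          (volume {x ∈ Metric.ball x0 r | f x < k}).toReal ≤
        C * r ^ (n + 1) *
          ∫ x in {x ∈ Metric.ball x0 r | k < f x ∧ f x < l}, ‖fderiv ℝ f x‖ := by
  haveI : NeZero n := ⟨by omega⟩
  haveI : Nontrivial (EuclideanSpace ℝ (Fin n)) := by infer_instance
  set V : ℝ≥0∞ := volume (Metric.ball (0 : EuclideanSpace ℝ (Fin n)) 1) with hV
  have hVpos : 0 < V := Metric.measure_ball_pos volume 0 one_pos
  have hVfin : V ≠ ⊤ := measure_ball_lt_top.ne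
  have hVt : 0 < V.toReal := ENNReal.toReal_pos hVpos.ne' hVfin
  refine ⟨2 ^ (n+2) * V.toReal, by positivity, ?_⟩
  intro r hr x0 f k l hkl h1 h2 h3
  set B : Set (EuclideanSpace ℝ (Fin n)) := Metric.ball x0 r with hB
  have hBo : IsOpen B := Metric.isOpen_ball
  have hfc : ContinuousOn f B := h2.continuousOn
  have hAo : IsOpen {z ∈ B | l < f z} := by
    have h := hfc.isOpen_inter_preimage hBo (isOpen_Ioi (a := l))
    exact h
  have hBko : IsOpen {z ∈ B | f z < k} := by
    have h := hfc.isOpen_inter_preimage hBo (isOpen_Iio (a := k))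
    exact h
  have hE'o : IsOpen {z ∈ B | k < f z ∧ f z < l} := by
    have h := hfc.isOpen_inter_preimage hBo (isOpen_Ioo (a := k) (b := l))
    exact h
  set A : Set (EuclideanSpace ℝ (Fin n)) := {z ∈ B | l < f z} with hA
  set Bk : Set (EuclideanSpace ℝ (Fin n)) := {z ∈ B | f z < k} with hBk
  set E' : Set (EuclideanSpace ℝ (Fin n)) := {z ∈ B | k < f z ∧ f z < l} with hE'
  set F : EuclideanSpace ℝ (Fin n) → ℝ≥0∞ :=
    Set.indicator E' (fun z => (‖fderiv ℝ f z‖₊ : ℝ≥0∞)) with hF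
  have hFm : Measurable F := by
    apply Measurable.indicator _ hE'o.measurableSet
    exact (measurable_fderiv ℝ f).nnnorm.coe_nnreal_ennreal
  -- the integral on the right-hand side
  set Int : ℝ := ∫ x in E', ‖fderiv ℝ f x‖ with hInt
  have hIntE : IntegrableOn (fun z => ‖fderiv ℝ f z‖) E' := h3.mono_set (fun z hz => hz.1)
  have hIeq : (∫⁻ z, F z ∂volume) = ENNReal.ofReal Int := by
    rw [hF, lintegral_indicator hE'o.measurableSet]
    have h := ofReal_integral_norm_eq_lintegral_enorm hIntE
    simp only [norm_norm, enorm_norm] at h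
    exact h.symm
  have hsubA : A ⊆ B := fun z hz => hz.1
  have hsubBk : Bk ⊆ B := fun z hz => hz.1
  have h2r0 : (0:ℝ) ≤ 2 * r := by linarith
  have h2rb : ∀ x ∈ B, ∀ y ∈ B, (‖x - y‖₊ : ℝ≥0∞) ≤ ENNReal.ofReal (2*r) := by
    intro x hx y hy
    rw [← enorm_eq_nnnorm, ← ofReal_norm]
    apply ENNReal.ofReal_le_ofReal
    have h1' : dist x y ≤ dist x x0 + dist x0 y := dist_triangle x x0 y
    have h2' : dist x x0 < r := Metric.mem_ball.1 hx
    have h3' : dist x0 y < r := by rw [dist_comm]; exact Metric.mem_ball.1 hy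
    rw [← dist_eq_norm]
    linarith
  set G : EuclideanSpace ℝ (Fin n) → EuclideanSpace ℝ (Fin n) → ℝ≥0∞ :=
    fun x y => ∫⁻ t in Set.Ioo (0:ℝ) 1, F (y + t • (x - y)) ∂volume with hG
  have hGm : ∀ x y, Measurable fun t : ℝ => F (y + t • (x - y)) := by
    intro x y
    have hc : Continuous fun t : ℝ => y + t • (x - y) := by fun_prop
    exact hFm.comp hc.measurable
  have step2 : ∀ x ∈ A, ∀ y ∈ Bk,
      ENNReal.ofReal (l - k) ≤ ENNReal.ofReal (2*r) * G x y := by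
    intro x hx y hy
    have hseg := seg_lemma hkl h2 hx.1 hy.1 hx.2 hy.2
    refine hseg.trans ?_
    rw [hG]
    rw [← lintegral_const_mul' _ _ ENNReal.ofReal_ne_top]
    apply setLIntegral_mono' measurableSet_Ioo
    intro t _
    exact mul_le_mul_left (h2rb x (hsubA hx) y (hsubBk hy)) _
  have main : ENNReal.ofReal (l - k) * volume A * volume Bk ≤
      ENNReal.ofReal (2*r) * (2^(n+1) * volume B * ENNReal.ofReal Int) := by
    calc ENNReal.ofReal (l - k) * volume A * volume Bk
        = ∫⁻ x in A, ∫⁻ _ in Bk, ENNReal.ofReal (l - k) ∂volume ∂volume := by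
          rw [lintegral_congr (fun x => setLIntegral_const Bk _), setLIntegral_const]
          ring
      _ ≤ ∫⁻ x in A, ∫⁻ y in Bk, ENNReal.ofReal (2*r) * G x y ∂volume ∂volume := by
          refine setLIntegral_mono' hAo.measurableSet (fun x hx => ?_)
          exact setLIntegral_mono' hBko.measurableSet (fun y hy => step2 x hx y hy)
      _ ≤ ∫⁻ x in B, ∫⁻ y in B, ENNReal.ofReal (2*r) * G x y ∂volume ∂volume := by
          refine le_trans (lintegral_mono fun x => lintegral_mono_set hsubBk) ?_
          exact lintegral_mono_set hsubA
      _ = ENNReal.ofReal (2*r) * ∫⁻ x in B, ∫⁻ y in B, G x y ∂volume ∂volume := by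
          rw [← lintegral_const_mul' _ _ ENNReal.ofReal_ne_top]
          apply lintegral_congr
          intro x
          rw [← lintegral_const_mul' _ _ ENNReal.ofReal_ne_top]
      _ ≤ ENNReal.ofReal (2*r) * (2^(n+1) * volume B * ∫⁻ z, F z ∂volume) := by
          gcongr
          exact fubini_bound F hFm B hBo.measurableSet
      _ = ENNReal.ofReal (2*r) * (2^(n+1) * volume B * ENNReal.ofReal Int) := by rw [hIeq]
  have hvolB : volume B = ENNReal.ofReal (r^n) * V := by
    rw [hB, Measure.addHaar_ball volume x0 hr.le, finrank_euclideanSpace_fin, hV]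
  rw [hvolB] at main
  have hRfin : ENNReal.ofReal (2*r) * (2^(n+1) * (ENNReal.ofReal (r^n) * V) * ENNReal.ofReal Int)
      ≠ ⊤ := by
    apply ENNReal.mul_ne_top ENNReal.ofReal_ne_top
    apply ENNReal.mul_ne_top
    · apply ENNReal.mul_ne_top
      · exact ENNReal.pow_ne_top (by simp)
      · exact ENNReal.mul_ne_top ENNReal.ofReal_ne_top hVfin
    · exact ENNReal.ofReal_ne_top
  have hlk0 : (0:ℝ) ≤ l - k := by linarith
  have hrn0 : (0:ℝ) ≤ r^n := by positivity
  have hInt0 : (0:ℝ) ≤ Int := by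
    rw [hInt]; exact integral_nonneg (fun z => norm_nonneg _)
  have h := ENNReal.toReal_mono hRfin main
  simp only [ENNReal.toReal_mul, ENNReal.toReal_pow, ENNReal.toReal_ofNat,
    ENNReal.toReal_ofReal hlk0, ENNReal.toReal_ofReal h2r0, ENNReal.toReal_ofReal hrn0,
    ENNReal.toReal_ofReal hInt0] at h
  refine h.trans (le_of_eq ?_)
  ring
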